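/- Let b : ℝ² → ℝ be continuous, 2π-periodic in both variables, and satisfy b(φ_t(p)) = b(p) for all t ∈ ℝ and p ∈ ℝ², where φ_t is the flow of X(x,y) = (sin y + √2, 1). Then b is constant. -/

import Mathlib

/-- Let `φ` be the flow of `X(x,y) = (sin y + √2, 1)` on `ℝ²`.  If `b : ℝ² → ℝ` is
continuous, `2π`-periodic in both variables, and invariant under the flow
(`b (φ t p) = b p`), then `b` is constant. -/
theorem stmt19 (φ : ℝ → ℝ × ℝ → ℝ × ℝ)
    (hφ0 : ∀ p : ℝ × ℝ, φ 0 p = p)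
    (hφ : ∀ (t : ℝ) (p : ℝ × ℝ),
      HasDerivAt (fun s => φ s p) (Real.sin (φ t p).2 + Real.sqrt 2, 1) t)
    (b : ℝ × ℝ → ℝ) (hb : Continuous b)
    (hperx : ∀ x y : ℝ, b (x + 2 * Real.pi, y) = b (x, y))
    (hpery : ∀ x y : ℝ, b (x, y + 2 * Real.pi) = b (x, y))
    (hinv : ∀ (t : ℝ) (p : ℝ × ℝ), b (φ t p) = b p) :
    ∀ p q : ℝ × ℝ, b p = b q := by
  -- Step 1: explicit formula for the flow.
  have hy : ∀ (t : ℝ) (p : ℝ × ℝ), (φ t p).2 = p.2 + t := by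
    intro t p
    have key : ∀ s : ℝ, HasDerivAt (fun s => (φ s p).2 - s) 0 s := by
      intro s
      have h2 : HasDerivAt (fun s => (φ s p).2) 1 s := (hφ s p).snd
      have := h2.sub (hasDerivAt_id s)
      exact this.congr_deriv (by simp)
    have hc := is_const_of_deriv_eq_zero (f := fun s => (φ s p).2 - s)
      (fun s => (key s).differentiableAt) (fun s => (key s).deriv) t 0
    simp only [hφ0] at hc
    linarith
  have hx : ∀ (t : ℝ) (p : ℝ × ℝ),
      (φ t p).1 = p.1 - Real.cos (p.2 + t) + Real.cos p.2 + Real.sqrt 2 * t := by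
    intro t p
    set w : ℝ → ℝ := fun s => p.1 - Real.cos (p.2 + s) + Real.cos p.2 + Real.sqrt 2 * s with hw
    have key : ∀ s : ℝ, HasDerivAt (fun s => (φ s p).1 - w s) 0 s := by
      intro s
      have h1 : HasDerivAt (fun s => (φ s p).1) (Real.sin (p.2 + s) + Real.sqrt 2) s := by
        have := (hφ s p).fst
        rwa [hy s p] at this
      have h2 : HasDerivAt w (Real.sin (p.2 + s) + Real.sqrt 2) s := by
        have hc : HasDerivAt (fun s : ℝ => Real.cos (p.2 + s)) (-Real.sin (p.2 + s)) s := by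
          exact ((Real.hasDerivAt_cos (p.2 + s)).comp s
            ((hasDerivAt_const s p.2).add (hasDerivAt_id s))).congr_deriv (by simp)
        have := (((hasDerivAt_const s p.1).sub hc).add (hasDerivAt_const s (Real.cos p.2))).add
          ((hasDerivAt_id s).const_mul (Real.sqrt 2))
        exact this.congr_deriv (by simp)
      exact (h1.sub h2).congr_deriv (by simp)
    have hc := is_const_of_deriv_eq_zero (f := fun s => (φ s p).1 - w s)
      (fun s => (key s).differentiableAt) (fun s => (key s).deriv) t 0
    simp only [hφ0, hw, add_zero, mul_zero] at hc
    linarith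
  -- f on the circle y = 0
  set f : ℝ → ℝ := fun x => b (x, 0) with hf
  have hfcont : Continuous f := by
    rw [hf]; exact hb.comp (continuous_id.prodMk continuous_const)
  -- f has period 2π√2
  have hf2 : ∀ x, f (x + 2 * Real.pi * Real.sqrt 2) = f x := by
    intro x
    have hφeq : φ (2 * Real.pi) (x, 0)
        = (x + 2 * Real.pi * Real.sqrt 2, 2 * Real.pi) := by
      have h1 := hx (2 * Real.pi) (x, 0)
      have h2 := hy (2 * Real.pi) (x, 0)
      simp only at h1 h2
      rw [Prod.ext_iff]
      constructor
      · rw [h1, zero_add, Real.cos_two_pi, Real.cos_zero]; ring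
      · rw [h2, zero_add]
    have h := hinv (2 * Real.pi) (x, 0)
    rw [hφeq] at h
    have h2 := hpery (x + 2 * Real.pi * Real.sqrt 2) 0
    rw [zero_add] at h2
    show b (x + 2 * Real.pi * Real.sqrt 2, 0) = b (x, 0)
    rw [← h2]; exact h
  have hf1 : ∀ x, f (x + 2 * Real.pi) = f x := fun x => hperx x 0
  -- the set of periods of f is a closed subgroup containing 2π and 2π√2
  set P : AddSubgroup ℝ :=
    { carrier := {r : ℝ | ∀ x, f (x + r) = f x}
      zero_mem' := by intro x; simp
      add_mem' := by
        intro a c ha hc x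
        rw [show x + (a + c) = x + a + c by ring, hc, ha]
      neg_mem' := by
        intro a ha x
        have := ha (x + -a)
        rw [show x + -a + a = x by ring] at this
        exact this.symm } with hP
  have hPcl : IsClosed (P : Set ℝ) := by
    have : (P : Set ℝ) = ⋂ x : ℝ, {r | f (x + r) = f x} := by
      ext r; simp [hP, Set.mem_iInter]
    rw [this]
    exact isClosed_iInter fun x =>
      isClosed_eq (hfcont.comp (continuous_const.add continuous_id)) continuous_const
  have h1P : (2 * Real.pi) ∈ P := hf1
  have h2P : (2 * Real.pi * Real.sqrt 2) ∈ P := hf2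
  -- P is dense, hence all of ℝ
  have hPd : Dense (P : Set ℝ) := by
    rcases P.dense_or_cyclic with h | ⟨a, ha⟩
    · exact h
    · exfalso
      rw [ha, AddSubgroup.mem_closure_singleton] at h1P h2P
      obtain ⟨m, hm⟩ := h1P
      obtain ⟨n, hn⟩ := h2P
      rw [zsmul_eq_mul] at hm hn
      have hm0 : m ≠ 0 := by
        rintro rfl; simp at hm
      have ha0 : a ≠ 0 := by
        rintro rfl; simp at hm
      have hmr : (m : ℝ) ≠ 0 := Int.cast_ne_zero.mpr hm0
      have key : Real.sqrt 2 * ((m : ℝ) * a) = (n : ℝ) * a := by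
        rw [hm, hn]; ring
      have hs : Real.sqrt 2 = (n : ℝ) / (m : ℝ) := by
        field_simp
        calc Real.sqrt 2 * (m : ℝ) = Real.sqrt 2 * (m : ℝ) * a / a := by field_simp
          _ = (n : ℝ) * a / a := by rw [mul_assoc, key]
          _ = (n : ℝ) := by field_simp
      exact irrational_sqrt_two ⟨(n : ℚ) / (m : ℚ), by push_cast [hs]; ring⟩
  have hPuniv : (P : Set ℝ) = Set.univ := by
    rw [← hPcl.closure_eq]; exact hPd.closure_eq
  -- f is constant
  have hfc : ∀ x y : ℝ, f x = f y := by
    intro x y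
    have hmem : (y - x) ∈ P := by rw [← SetLike.mem_coe, hPuniv]; trivial
    have := hmem x
    rw [show x + (y - x) = y by ring] at this
    exact this.symm
  -- reduce any point to the circle y = 0
  have hred : ∀ x y : ℝ, b (x, y) = f (x - Real.cos 0 + Real.cos y + Real.sqrt 2 * (-y)) := by
    intro x y
    have h := hinv (-y) (x, y)
    have hφeq : φ (-y) (x, y)
        = (x - Real.cos 0 + Real.cos y + Real.sqrt 2 * (-y), 0) := by
      have h1 := hx (-y) (x, y)
      have h2 := hy (-y) (x, y)
      simp only at h1 h2
      rw [Prod.ext_iff]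
      constructor
      · rw [h1, add_neg_cancel]
      · rw [h2, add_neg_cancel]
    rw [hφeq] at h
    exact h.symm
  intro p q
  rw [show p = (p.1, p.2) from rfl, show q = (q.1, q.2) from rfl, hred, hred]
  exact hfc _ _
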